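/- Monotonicity of DQAEM: with 𝒢(θ) = (1/β)·ln Tr[e^{−β(H(θ)+H^{nc})}] and 𝒰(θ;θ') = Tr[ρ(θ')·ln e^{−β(H(θ)+H^{nc})}] where ρ(θ') = e^{−β(H(θ')+H^{nc})}/Tr[e^{−β(H(θ')+H^{nc})}], if 𝒰(θ_{t+1};θ_t) ≥ 𝒰(θ_t;θ_t) then 𝒢(θ_{t+1}) ≥ 𝒢(θ_t). -/

import Mathlib

/-!
Write `X = -βA(θₜ)` and `Y = -βA(θₜ₊₁)`. After clearing the positive factor `Tr e^X`, the
hypothesis reads `Re Tr[e^X X] ≤ Re Tr[e^X Y]`, and the claim is `Tr e^X ≤ Tr e^Y`: this is the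
Gibbs variational principle, which replaces the nonnegativity of the relative entropy
`S(ρ(θₜ) ‖ ρ(θₜ₊₁))`. In an eigenbasis of `X`, with eigenvalues `λ` and `m` the diagonal of `Y`,
the hypothesis is `∑ e^λ λ ≤ ∑ e^λ m`, and the tangent-line bound `e^m ≥ e^λ (1 + m - λ)` gives
`∑ e^λ ≤ ∑ e^m`. Peierls' inequality `∑ e^m ≤ Tr e^Y` finishes.
-/

open Matrix Unitary

lemma Real.sum_exp_le_sum_exp_of_sum_exp_mul_le {ι : Type*} (s : Finset ι) {l m : ι → ℝ}
    (h : ∑ i ∈ s, Real.exp (l i) * l i ≤ ∑ i ∈ s, Real.exp (l i) * m i) :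
    ∑ i ∈ s, Real.exp (l i) ≤ ∑ i ∈ s, Real.exp (m i) := by
  have tangent (i : ι) : Real.exp (l i) * (1 + (m i - l i)) ≤ Real.exp (m i) :=
    calc Real.exp (l i) * (1 + (m i - l i)) ≤ Real.exp (l i) * Real.exp (m i - l i) := by
          gcongr; linarith [Real.add_one_le_exp (m i - l i)]
      _ = Real.exp (m i) := by rw [← Real.exp_add, add_sub_cancel]
  calc ∑ i ∈ s, Real.exp (l i)
      ≤ ∑ i ∈ s, Real.exp (l i) * (1 + (m i - l i)) := by
        simp only [mul_add, mul_one, mul_sub, Finset.sum_add_distrib, Finset.sum_sub_distrib]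
        linarith
    _ ≤ ∑ i ∈ s, Real.exp (m i) := Finset.sum_le_sum fun i _ => tangent i

namespace Matrix

variable {n 𝕜 : Type*} [Fintype n] [DecidableEq n] [RCLike 𝕜]

lemma exp_conjStarAlgAut (u : unitary (Matrix n n 𝕜)) (A : Matrix n n 𝕜) :
    NormedSpace.exp (conjStarAlgAut 𝕜 _ u A) = conjStarAlgAut 𝕜 _ u (NormedSpace.exp A) := by
  have hinv : (u : Matrix n n 𝕜)⁻¹ = star (u : Matrix n n 𝕜) :=
    inv_eq_left_inv (Unitary.coe_star_mul_self u)
  simpa only [conjStarAlgAut_apply, hinv] using exp_conj (u : Matrix n n 𝕜) A Unitary.isUnit_coe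

lemma trace_conjStarAlgAut (u : unitary (Matrix n n 𝕜)) (A : Matrix n n 𝕜) :
    trace (conjStarAlgAut 𝕜 _ u A) = trace A := by
  rw [conjStarAlgAut_apply, trace_mul_cycle, Unitary.coe_star_mul_self, one_mul]

lemma conjStarAlgAut_diagonal_apply_self (u : unitary (Matrix n n 𝕜)) (d : n → ℝ) (i : n) :
    conjStarAlgAut 𝕜 _ u (diagonal (RCLike.ofReal ∘ d)) i i
      = ((∑ k, d k * ‖(u : Matrix n n 𝕜) i k‖ ^ 2 : ℝ) : 𝕜) := by
  rw [conjStarAlgAut_apply, mul_apply]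
  push_cast
  refine Finset.sum_congr rfl fun k _ => ?_
  rw [mul_diagonal, star_apply, RCLike.star_def, ← RCLike.mul_conj, Function.comp_apply]
  ring

lemma exp_diagonal_ofReal (d : n → ℝ) :
    NormedSpace.exp (diagonal (RCLike.ofReal ∘ d : n → 𝕜))
      = diagonal (RCLike.ofReal ∘ Real.exp ∘ d) := by
  rw [exp_diagonal]
  congr 1
  funext i
  rw [Pi.exp_def, Function.comp_apply, Function.comp_apply, Real.exp_eq_exp_ℝ]
  exact (NormedSpace.algebraMap_exp_comm (d i)).symm

namespace IsHermitian

variable {A : Matrix n n 𝕜} (hA : A.IsHermitian)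
include hA

lemma exp_eq : NormedSpace.exp A
    = conjStarAlgAut 𝕜 _ hA.eigenvectorUnitary
        (diagonal (RCLike.ofReal ∘ Real.exp ∘ hA.eigenvalues)) := by
  conv_lhs => rw [hA.spectral_theorem]
  rw [exp_conjStarAlgAut, exp_diagonal_ofReal]

lemma conjStarAlgAut_star_eigenvectorUnitary_exp :
    conjStarAlgAut 𝕜 _ (star hA.eigenvectorUnitary) (NormedSpace.exp A)
      = diagonal (RCLike.ofReal ∘ Real.exp ∘ hA.eigenvalues) := by
  rw [← exp_conjStarAlgAut, conjStarAlgAut_star_eigenvectorUnitary, exp_diagonal_ofReal]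

lemma trace_exp : trace (NormedSpace.exp A) = ((∑ i, Real.exp (hA.eigenvalues i) : ℝ) : 𝕜) := by
  rw [← trace_conjStarAlgAut (star hA.eigenvectorUnitary),
    hA.conjStarAlgAut_star_eigenvectorUnitary_exp, trace_diagonal]
  push_cast
  rfl

lemma trace_exp_mul (B : Matrix n n 𝕜) :
    trace (NormedSpace.exp A * B) = ∑ i, (Real.exp (hA.eigenvalues i) : 𝕜) *
      conjStarAlgAut 𝕜 _ (star hA.eigenvectorUnitary) B i i := by
  rw [← trace_conjStarAlgAut (star hA.eigenvectorUnitary), map_mul,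
    hA.conjStarAlgAut_star_eigenvectorUnitary_exp]
  simp [trace, diagonal_mul]

lemma re_trace_exp_mul_self :
    RCLike.re (trace (NormedSpace.exp A * A))
      = ∑ i, Real.exp (hA.eigenvalues i) * hA.eigenvalues i := by
  rw [hA.trace_exp_mul, conjStarAlgAut_star_eigenvectorUnitary, map_sum]
  simp

/-- Peierls' inequality, entrywise: Jensen for `Real.exp` with the weights `‖U i k‖ ^ 2`, which
sum to one along a row of the unitary `U`. -/
lemma exp_re_apply_self_le (i : n) :
    Real.exp (RCLike.re (A i i)) ≤ RCLike.re (NormedSpace.exp A i i) := by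
  set w : n → ℝ := fun k => ‖(hA.eigenvectorUnitary : Matrix n n 𝕜) i k‖ ^ 2
  have entry (d : n → ℝ) :
      RCLike.re (conjStarAlgAut 𝕜 _ hA.eigenvectorUnitary (diagonal (RCLike.ofReal ∘ d)) i i)
        = ∑ k, w k * d k := by
    rw [conjStarAlgAut_diagonal_apply_self, RCLike.ofReal_re]
    exact Finset.sum_congr rfl fun k _ => mul_comm _ _
  have hw : ∑ k, w k = 1 := by
    simpa [Function.comp_def] using (entry 1).symm
  calc Real.exp (RCLike.re (A i i))
      = Real.exp (∑ k, w k * hA.eigenvalues k) := by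
        conv_lhs => rw [hA.spectral_theorem]
        rw [entry]
    _ ≤ ∑ k, w k * Real.exp (hA.eigenvalues k) :=
        convexOn_exp.map_sum_le (fun k _ => sq_nonneg _) hw fun k _ => Set.mem_univ _
    _ = RCLike.re (NormedSpace.exp A i i) := by
        rw [hA.exp_eq, entry]
        rfl

lemma sum_exp_re_diag_le_re_trace_exp :
    ∑ i, Real.exp (RCLike.re (A i i)) ≤ RCLike.re (trace (NormedSpace.exp A)) := by
  rw [trace, map_sum]
  exact Finset.sum_le_sum fun i _ => hA.exp_re_apply_self_le i

theorem re_trace_exp_le_of_re_trace_exp_mul_le {B : Matrix n n 𝕜} (hB : B.IsHermitian)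
    (h : RCLike.re (trace (NormedSpace.exp A * A)) ≤ RCLike.re (trace (NormedSpace.exp A * B))) :
    RCLike.re (trace (NormedSpace.exp A)) ≤ RCLike.re (trace (NormedSpace.exp B)) := by
  set Φ := conjStarAlgAut 𝕜 (Matrix n n 𝕜) (star hA.eigenvectorUnitary)
  have hΦB : (Φ B).IsHermitian := IsSelfAdjoint.map hB Φ
  have hgibbs : ∑ i, Real.exp (hA.eigenvalues i) * hA.eigenvalues i
      ≤ ∑ i, Real.exp (hA.eigenvalues i) * RCLike.re (Φ B i i) := by
    rw [hA.re_trace_exp_mul_self, hA.trace_exp_mul, map_sum] at h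
    simpa only [RCLike.re_ofReal_mul] using h
  calc RCLike.re (trace (NormedSpace.exp A))
      = ∑ i, Real.exp (hA.eigenvalues i) := by rw [hA.trace_exp, RCLike.ofReal_re]
    _ ≤ ∑ i, Real.exp (RCLike.re (Φ B i i)) :=
        Real.sum_exp_le_sum_exp_of_sum_exp_mul_le _ hgibbs
    _ ≤ RCLike.re (trace (NormedSpace.exp (Φ B))) := hΦB.sum_exp_re_diag_le_re_trace_exp
    _ = RCLike.re (trace (NormedSpace.exp B)) := by
        rw [exp_conjStarAlgAut, trace_conjStarAlgAut]

end IsHermitian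

end Matrix

/-- Monotonicity of DQAEM: with A(θ) = H(θ) + H^{nc}, Gibbs density
ρ(θ) = e^{−βA(θ)}/Tr e^{−βA(θ)}, negative free energy
𝒢(θ) = (1/β)·ln Tr[e^{−βA(θ)}] and 𝒰(θ;θ') = Tr[ρ(θ')·(−βA(θ))],
if the M-step does not decrease 𝒰, then 𝒢 does not decrease. -/
theorem dqaem_monotonicity
    {K : ℕ} (hK : 0 < K) {Θ : Type*}
    (H : Θ → Matrix (Fin K) (Fin K) ℂ) (Hnc : Matrix (Fin K) (Fin K) ℂ)
    (hH : ∀ θ, (H θ).IsHermitian) (hHnc : Hnc.IsHermitian)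
    (β : ℝ) (hβ : 0 < β)
    (A : Θ → Matrix (Fin K) (Fin K) ℂ) (hA : ∀ θ, A θ = H θ + Hnc)
    (ρ : Θ → Matrix (Fin K) (Fin K) ℂ)
    (hρ : ∀ θ, ρ θ = (Matrix.trace (NormedSpace.exp (-(β : ℂ) • A θ)))⁻¹ •
                       NormedSpace.exp (-(β : ℂ) • A θ))
    (𝒢 : Θ → ℝ)
    (h𝒢 : ∀ θ, 𝒢 θ = (1 / β) *
        Real.log (Matrix.trace (NormedSpace.exp (-(β : ℂ) • A θ))).re)
    (𝒰 : Θ → Θ → ℝ)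
    (h𝒰 : ∀ θ θ', 𝒰 θ θ' = (Matrix.trace (ρ θ' * (-(β : ℂ) • A θ))).re)
    (θt θt1 : Θ)
    (hstep : 𝒰 θt θt ≤ 𝒰 θt1 θt) :
    𝒢 θt ≤ 𝒢 θt1 := by
  have hermitian (θ : Θ) : (-(β : ℂ) • A θ).IsHermitian := by
    rw [hA θ]
    exact ((hH θ).add hHnc).smul (by simp [isSelfAdjoint_iff])
  have hX := hermitian θt
  have hZ : 0 < ∑ i, Real.exp (hX.eigenvalues i) :=
    Finset.sum_pos (fun i _ => Real.exp_pos _) (Finset.univ_nonempty_iff.2 ⟨⟨0, hK⟩⟩)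
  have hgibbs : (trace (NormedSpace.exp (-(β : ℂ) • A θt) * (-(β : ℂ) • A θt))).re
      ≤ (trace (NormedSpace.exp (-(β : ℂ) • A θt) * (-(β : ℂ) • A θt1))).re := by
    rw [h𝒰, h𝒰, hρ, hX.trace_exp] at hstep
    simp only [smul_mul, trace_smul, smul_eq_mul, ← RCLike.ofReal_inv, ← RCLike.re_to_complex,
      RCLike.re_ofReal_mul] at hstep
    exact le_of_mul_le_mul_left hstep (inv_pos.2 hZ)
  rw [h𝒢, h𝒢]
  refine mul_le_mul_of_nonneg_left (Real.log_le_log ?_ ?_) (by positivity)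
  · rwa [← RCLike.re_to_complex, hX.trace_exp, RCLike.ofReal_re]
  · exact hX.re_trace_exp_le_of_re_trace_exp_mul_le (hermitian θt1) hgibbs
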